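/- arXiv:0910.0447 — 2 statements merged into one kernel-verified Lean document; each statement's English description precedes it below -/
import Mathlib

section
/- Two symmetry operators a, b ∈ ℂ[S_N] satisfy ⟨a u, v⟩ = ⟨u, b v⟩ for all u, v ∈ H if and only if b = (ā)* + c for some c ∈ J₀, where J₀ is the ideal of elements annihilating H. -/
open MonoidAlgebra

noncomputable section

/-- The complex group ring `ℂ[S_N]`. -/
abbrev GA (N : ℕ) : Type := MonoidAlgebra ℂ (Equiv.Perm (Fin N))

/-- The star operation `a* = Σ_p a_p p⁻¹`. -/
def starOp {N : ℕ} (a : GA N) : GA N :=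
  MonoidAlgebra.ofCoeff (Finsupp.equivMapDomain (Equiv.inv (Equiv.Perm (Fin N))) a.coeff)

/-- Coefficient-wise complex conjugation `ā = Σ_p conj(a_p) p`. -/
def conjOp {N : ℕ} (a : GA N) : GA N :=
  MonoidAlgebra.ofCoeff (Finsupp.mapRange (starRingEnd ℂ) (map_zero _) a.coeff)

/-- The Hilbert space `H` with orthonormal basis indexed by `σ : {1,…,N} → {1,…,K}`. -/
abbrev H (N K : ℕ) : Type := (Fin N → Fin K) → ℂ

/-- The basis vector `|σ⟩`. -/
def ket {N K : ℕ} (σ : Fin N → Fin K) : H N K :=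
  fun τ => if τ = σ then 1 else 0

/-- Action of `a = Σ_p a_p p ∈ ℂ[S_N]` on `w ∈ H`:
`a w = Σ_p Σ_σ a_p w_σ |σ ∘ p⁻¹⟩`; the coefficient of `aw` at `τ` is `Σ_p a_p w_{τ∘p}`. -/
def act {N K : ℕ} (a : GA N) (w : H N K) : H N K :=
  fun τ => ∑ p : Equiv.Perm (Fin N), a.coeff p * w (τ ∘ p)

/-- The inner product `⟨u, v⟩ = Σ_σ u_σ conj(v_σ)`. -/
def inn {N K : ℕ} (u v : H N K) : ℂ :=
  ∑ σ : Fin N → Fin K, u σ * (starRingEnd ℂ) (v σ)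

theorem Fintype.sum_comp_perm_right {α β M : Type*} [Fintype α] [DecidableEq α] [Fintype β]
    [AddCommMonoid M] (p : Equiv.Perm α) (f : (α → β) → M) :
    ∑ σ : α → β, f (σ ∘ p) = ∑ σ, f σ :=
  (p.symm.arrowCongr (Equiv.refl β)).sum_comp f

section

variable {N K : ℕ}

theorem act_add (x y : GA N) (w : H N K) : act (x + y) w = act x w + act y w := by
  funext τ
  simp only [act, coeff_add, Finsupp.add_apply, add_mul, Finset.sum_add_distrib, Pi.add_apply]

theorem act_sub (x y : GA N) (w : H N K) : act (x - y) w = act x w - act y w := by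
  funext τ
  simp only [act, coeff_sub, Finsupp.sub_apply, sub_mul, Finset.sum_sub_distrib, Pi.sub_apply]

theorem inn_ket (τ : Fin N → Fin K) (w : H N K) : inn (ket τ) w = starRingEnd ℂ (w τ) := by
  simp [inn, ket, ite_mul]

theorem eq_of_forall_inn_eq {w₁ w₂ : H N K} (h : ∀ u, inn u w₁ = inn u w₂) : w₁ = w₂ := by
  funext τ
  simpa only [inn_ket, (starRingEnd ℂ).injective.eq_iff] using h (ket τ)

theorem coeff_starOp_conjOp (a : GA N) (p : Equiv.Perm (Fin N)) :
    (starOp (conjOp a)).coeff p = starRingEnd ℂ (a.coeff p⁻¹) := rfl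

/-- Both sides equal `Σ_p Σ_σ a_p u_σ conj(v_{σ∘p⁻¹})`: on the left substitute `σ ↦ σ ∘ p⁻¹`,
on the right `p ↦ p⁻¹`. -/
theorem inn_act_left (a : GA N) (u v : H N K) :
    inn (act a u) v = inn u (act (starOp (conjOp a)) v) := by
  calc inn (act a u) v
      = ∑ p, ∑ σ : Fin N → Fin K, a.coeff p * u (σ ∘ p) * starRingEnd ℂ (v σ) := by
        simp only [inn, act, Finset.sum_mul]
        exact Finset.sum_comm
    _ = ∑ p, ∑ σ : Fin N → Fin K, a.coeff p * u σ * starRingEnd ℂ (v (σ ∘ ⇑p⁻¹)) := by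
        refine Finset.sum_congr rfl fun p _ => ?_
        symm
        rw [← Fintype.sum_comp_perm_right p]
        simp [Function.comp_assoc]
    _ = ∑ p, ∑ σ : Fin N → Fin K, u σ * (a.coeff p⁻¹ * starRingEnd ℂ (v (σ ∘ ⇑p))) := by
        refine Fintype.sum_equiv (Equiv.inv _) _ _ fun p => Finset.sum_congr rfl fun σ _ => ?_
        simp only [Equiv.inv_apply, inv_inv]
        ring
    _ = inn u (act (starOp (conjOp a)) v) := by
        simp only [inn, act, coeff_starOp_conjOp, map_sum, map_mul, Complex.conj_conj,
          Finset.mul_sum]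
        exact Finset.sum_comm

end

/-- `⟨a u, v⟩ = ⟨u, b v⟩` for all `u, v ∈ H` iff `b = (ā)* + c` with `c ∈ J₀`. -/
theorem adjoint_iff (N K : ℕ) (a b : GA N) :
    (∀ u v : H N K, inn (act a u) v = inn u (act b v)) ↔
      ∃ c : GA N, (∀ u : H N K, act c u = 0) ∧ b = starOp (conjOp a) + c := by
  constructor
  · intro h
    refine ⟨b - starOp (conjOp a), fun v => ?_, by abel⟩
    rw [act_sub, sub_eq_zero]
    exact eq_of_forall_inn_eq fun u => by rw [← h, inn_act_left]
  · rintro ⟨c, hc, rfl⟩ u v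
    rw [inn_act_left, act_add, hc, add_zero]
end
end

section
/- Let R ⊂ ℂ[S_N] be a minimal right ideal not contained in the annihilator ideal J₀ of the Hilbert space H. Then R contains exactly one generating idempotent f satisfying (f̄)* = f. -/
/-!
For the involution `a ↦ (ā)*` the coefficient of the identity in `a (ā)*` is `Σ_p |a_p|²`, so
`a (ā)* = 0` forces `a = 0`. If `a ≠ 0` lies in the minimal right ideal `R`, then `e = a (ā)*` is a
nonzero self-adjoint element of `R`. Left multiplication by `e` preserves `R` and has an eigenvalue
`μ`; the `μ`-eigenvectors form a nonzero right ideal inside `R`, hence all of `R`. So `e² = μ e`,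
positivity makes `μ` real and nonzero, and `f = μ⁻¹ e` is a self-adjoint idempotent generating `R`.
Two self-adjoint idempotents `f`, `g` generating the same right ideal satisfy `f g = g` and
`g f = f`; the adjoint of the second equation turns into `f = g`.
-/

open MonoidAlgebra

noncomputable section

theorem IsIdempotentElem.mul_eq_of_dvd {A : Type*} [Semigroup A] {f g : A}
    (hf : IsIdempotentElem f) (hfg : f ∣ g) : f * g = g := by
  obtain ⟨c, rfl⟩ := hfg
  rw [← mul_assoc, hf.eq]

theorem IsStarProjection.eq_of_dvd_of_dvd {A : Type*} [Semigroup A] [StarMul A] {f g : A}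
    (hf : IsStarProjection f) (hg : IsStarProjection g) (hfg : f ∣ g) (hgf : g ∣ f) : f = g :=
  calc f = g * f := (hg.isIdempotentElem.mul_eq_of_dvd hgf).symm
    _ = star (f * g) := by rw [star_mul, hf.isSelfAdjoint.star_eq, hg.isSelfAdjoint.star_eq]
    _ = g := by rw [hf.isIdempotentElem.mul_eq_of_dvd hfg, hg.isSelfAdjoint.star_eq]

section RightIdeal

variable {A : Type*} [Ring A]

theorem mul_mem_of_mem_rightIdeal {R : Submodule Aᵐᵒᵖ A} {x : A} (hx : x ∈ R) (y : A) :
    x * y ∈ R :=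
  R.smul_mem (MulOpposite.op y) hx

variable {K : Type*} [Field K] [Algebra K A]

def rightEigenIdeal (e : A) (μ : K) : Submodule Aᵐᵒᵖ A where
  carrier := {x | e * x = μ • x}
  add_mem' {x y} (hx : e * x = μ • x) (hy : e * y = μ • y) := by
    change e * (x + y) = μ • (x + y)
    rw [mul_add, hx, hy, smul_add]
  zero_mem' := by simp
  smul_mem' y x (hx : e * x = μ • x) := by
    change e * (x * y.unop) = μ • (x * y.unop)
    rw [← mul_assoc, hx, smul_mul_assoc]

theorem exists_forall_mul_eq_smul_of_isAtom [IsAlgClosed K] [FiniteDimensional K A]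
    {R : Submodule Aᵐᵒᵖ A} (hR : IsAtom R) {e : A} (he : e ∈ R) :
    ∃ μ : K, ∀ x ∈ R, e * x = μ • x := by
  let RK := R.restrictScalars K
  have : Nontrivial RK := Submodule.nontrivial_iff_ne_bot.mpr
    (by simpa [RK, ← Submodule.restrictScalars_eq_bot_iff K] using hR.1)
  obtain ⟨μ, hμ⟩ := Module.End.exists_eigenvalue
    ((LinearMap.mulLeft K e).restrict fun x hx => mul_mem_of_mem_rightIdeal he x :
      Module.End K RK)
  obtain ⟨v, hv⟩ := hμ.exists_hasEigenvector
  have hvR : (v : A) ∈ R ⊓ rightEigenIdeal e μ :=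
    ⟨v.2, congrArg Subtype.val hv.apply_eq_smul⟩
  have hne : R ⊓ rightEigenIdeal e μ ≠ ⊥ := fun h =>
    hv.2 (Subtype.ext (by simpa [h] using hvR))
  have hle : R ≤ rightEigenIdeal e μ :=
    inf_eq_left.mp ((hR.le_iff.mp inf_le_left).resolve_left hne)
  exact ⟨μ, fun x hx => hle hx⟩

variable [StarRing A]

theorem ne_zero_of_mul_self_eq_smul (hpos : ∀ a : A, a * star a = 0 → a = 0) {e : A}
    (he : IsSelfAdjoint e) (he0 : e ≠ 0) {μ : K} (hee : e * e = μ • e) : μ ≠ 0 := by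
  rintro rfl
  exact he0 (hpos e (by rw [he.star_eq, hee, zero_smul]))

variable [StarRing K] [StarModule K A]

theorem isStarProjection_inv_smul (hpos : ∀ a : A, a * star a = 0 → a = 0) {e : A}
    (he : IsSelfAdjoint e) (he0 : e ≠ 0) {μ : K} (hee : e * e = μ • e) :
    IsStarProjection (μ⁻¹ • e) := by
  have hμ0 := ne_zero_of_mul_self_eq_smul hpos he he0 hee
  have hμ : star μ = μ := smul_left_injective K he0 <|
    calc star μ • e = star (e * e) := by rw [hee, star_smul, he.star_eq]
      _ = μ • e := by rw [star_mul, he.star_eq, hee]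
  constructor
  · change (μ⁻¹ • e) * (μ⁻¹ • e) = μ⁻¹ • e
    rw [smul_mul_smul_comm, hee, smul_smul]
    congr 1
    field_simp
  · change star (μ⁻¹ • e) = μ⁻¹ • e
    rw [star_smul, star_inv₀, hμ, he.star_eq]

variable (K) in
theorem existsUnique_isStarProjection_dvd_iff_mem [IsAlgClosed K] [FiniteDimensional K A]
    (hpos : ∀ a : A, a * star a = 0 → a = 0) {R : Submodule Aᵐᵒᵖ A} (hR : IsAtom R) :
    ∃! f : A, IsStarProjection f ∧ ∀ x, x ∈ R ↔ f ∣ x := by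
  obtain ⟨a, haR, ha0⟩ := (Submodule.ne_bot_iff R).mp hR.1
  have heR : a * star a ∈ R := mul_mem_of_mem_rightIdeal haR _
  have he0 : a * star a ≠ 0 := fun h => ha0 (hpos a h)
  obtain ⟨μ, hμ⟩ := exists_forall_mul_eq_smul_of_isAtom (K := K) hR heR
  have hμ0 := ne_zero_of_mul_self_eq_smul hpos (.mul_star_self a) he0 (hμ _ heR)
  set f := μ⁻¹ • (a * star a)
  have hf : IsStarProjection f := isStarProjection_inv_smul hpos (.mul_star_self a) he0 (hμ _ heR)
  have hfR : f ∈ R := (R.restrictScalars K).smul_mem μ⁻¹ heR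
  have hf_mul : ∀ x ∈ R, f * x = x := fun x hx => by
    rw [smul_mul_assoc, hμ x hx, inv_smul_smul₀ hμ0]
  refine ⟨f, ⟨hf, fun x => ⟨fun hx => ⟨x, (hf_mul x hx).symm⟩, ?_⟩⟩, ?_⟩
  · rintro ⟨y, rfl⟩
    exact mul_mem_of_mem_rightIdeal hfR y
  · rintro g ⟨hg, hgR⟩
    have hfg : f ∣ g := ⟨g, (hf_mul g ((hgR g).mpr (dvd_refl g))).symm⟩
    exact (hf.eq_of_dvd_of_dvd hg hfg ((hgR f).mp hfR)).symm

end RightIdeal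

namespace MonoidAlgebra

variable {k G : Type*} [Group G]

section Semiring

variable [Semiring k] [StarRing k]

instance : Star k[G] :=
  ⟨fun a => ofCoeff <|
    Finsupp.equivMapDomain (Equiv.inv G) (Finsupp.mapRange star (star_zero k) a.coeff)⟩

theorem coeff_star (a : k[G]) (g : G) : (star a).coeff g = star (a.coeff g⁻¹) := rfl

theorem star_single (g : G) (c : k) : star (single g c) = single g⁻¹ (star c) := by
  classical
  ext h
  simp only [coeff_star, coeff_single, Finsupp.single_apply, ← inv_eq_iff_eq_inv]
  split_ifs <;> simp

instance : StarAddMonoid k[G] where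
  star_involutive a := by ext g; simp [coeff_star]
  star_add a b := by ext g; simp [coeff_star]

instance : StarRing k[G] where
  star_add := star_add
  star_mul a b := by
    induction a using induction_linear with
    | zero => simp
    | add a a' ha ha' => simp only [add_mul, star_add, ha, ha', mul_add]
    | single g c =>
      induction b using induction_linear with
      | zero => simp
      | add b b' hb hb' => simp only [mul_add, star_add, hb, hb', add_mul]
      | single h d => simp only [single_mul_single, star_single, mul_inv_rev, star_mul]

theorem coeff_mul_star_self_one (a : k[G]) :
    (a * star a).coeff 1 = ∑ g ∈ a.coeff.support, a.coeff g * star (a.coeff g) := by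
  simp [coeff_mul_apply_left, coeff_star, Finsupp.sum]

end Semiring

instance [CommSemiring k] [StarRing k] : StarModule k k[G] where
  star_smul c a := by ext g; simp [coeff_star]

instance [Semiring k] [Finite G] : Module.Finite k k[G] :=
  Module.Finite.equiv (coeffLinearEquiv k).symm

theorem mul_star_self_eq_zero [RCLike k] {a : k[G]} (h : a * star a = 0) : a = 0 := by
  have hsum : ∑ g ∈ a.coeff.support, ‖a.coeff g‖ ^ 2 = 0 := by
    have := congrArg (fun x => x.coeff 1) h
    simp only [coeff_mul_star_self_one, ← starRingEnd_apply, RCLike.mul_conj, coeff_zero,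
      Finsupp.coe_zero, Pi.zero_apply] at this
    exact_mod_cast this
  ext g
  by_contra hg
  have := (Finset.sum_eq_zero_iff_of_nonneg fun _ _ => by positivity).mp hsum g
    (Finsupp.mem_support_iff.mpr hg)
  simp_all

end MonoidAlgebra

theorem star_eq_starOp_conjOp {N : ℕ} (f : GA N) : star f = starOp (conjOp f) := rfl

theorem unique_selfadjoint_generator_general (N : ℕ) (R : Submodule (GA N)ᵐᵒᵖ (GA N))
    (hmin : IsAtom R) :
    ∃! f : GA N, f * f = f ∧ (∀ x : GA N, x ∈ R ↔ ∃ y : GA N, x = f * y) ∧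
      starOp (conjOp f) = f := by
  refine (existsUnique_congr fun f => ?_).mp
    (existsUnique_isStarProjection_dvd_iff_mem ℂ
      (fun _ => MonoidAlgebra.mul_star_self_eq_zero) hmin)
  rw [isStarProjection_iff', and_right_comm, and_assoc, star_eq_starOp_conjOp]
  rfl

/-- a minimal right ideal `R ⊆ ℂ[S_N]` (an atom in the lattice of right
ideals) not contained in the annihilator `J₀` of `H` contains exactly one generating
idempotent `f` with property (S): `(f̄)* = f`. -/
theorem unique_selfadjoint_generator (N K : ℕ) (R : Submodule (GA N)ᵐᵒᵖ (GA N))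
    (hmin : IsAtom R) (hnot : ¬ ∀ a ∈ R, ∀ u : H N K, act a u = 0) :
    ∃! f : GA N, f * f = f ∧ (∀ x : GA N, x ∈ R ↔ ∃ y : GA N, x = f * y) ∧
      starOp (conjOp f) = f :=
  unique_selfadjoint_generator_general N R hmin
end
end
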